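/- arXiv:2302.12786 — 6 statements merged into one kernel-verified Lean document; each statement's English description precedes it below -/
import Mathlib

section
/- Let X be a normed vector space, Φ : X → [0,+∞] convex, v ∈ X and τ > 0. If u and u' both minimize the functional w ↦ Φ(w) + ‖w − v‖²/(2τ) over X, then ‖u − v‖ = ‖u' − v‖. -/
/-!
Let `m` be the midpoint of the two minimizers. Testing the minimality of `u` and of `u'` against
`m` and adding, the midpoint convexity of `Φ` cancels the energy terms and leaves
`‖u - v‖² + ‖u' - v‖² ≤ 2 ‖m - v‖²`. Since `‖m - v‖ ≤ (‖u - v‖ + ‖u' - v‖) / 2` by the triangle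
inequality, this forces `(‖u - v‖ - ‖u' - v‖)² ≤ 0`.
-/

open scoped ENNReal

theorem ENNReal.add_le_two_mul_of_minimizers {α : Type*} {Φ g : α → ℝ≥0∞} {u u' m : α}
    (hu : ∀ w, Φ u + g u ≤ Φ w + g w) (hu' : ∀ w, Φ u' + g u' ≤ Φ w + g w)
    (hm : 2 * Φ m ≤ Φ u + Φ u') (hΦu : Φ u ≠ ⊤) (hgu : g u ≠ ⊤) :
    g u + g u' ≤ 2 * g m := by
  have hΦu' : Φ u' ≠ ⊤ :=
    ne_top_of_le_ne_top (ENNReal.add_ne_top.2 ⟨hΦu, hgu⟩) (le_self_add.trans (hu' u))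
  have hΦ : Φ u + Φ u' ≠ ⊤ := ENNReal.add_ne_top.2 ⟨hΦu, hΦu'⟩
  rw [← ENNReal.add_le_add_iff_left hΦ]
  calc Φ u + Φ u' + (g u + g u') = (Φ u + g u) + (Φ u' + g u') := by ring
    _ ≤ (Φ m + g m) + (Φ m + g m) := add_le_add (hu m) (hu' m)
    _ = 2 * Φ m + 2 * g m := by ring
    _ ≤ Φ u + Φ u' + 2 * g m := by gcongr

theorem norm_eq_of_sq_add_sq_le_two_mul_sq_norm_midpoint {E : Type*} [SeminormedAddCommGroup E]
    [NormedSpace ℝ E] {x y : E} (h : ‖x‖ ^ 2 + ‖y‖ ^ 2 ≤ 2 * ‖(1 / 2 : ℝ) • (x + y)‖ ^ 2) :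
    ‖x‖ = ‖y‖ := by
  have hmid : ‖(1 / 2 : ℝ) • (x + y)‖ ≤ (‖x‖ + ‖y‖) / 2 := by
    rw [norm_smul, Real.norm_of_nonneg (by norm_num)]
    linarith [norm_add_le x y]
  nlinarith [norm_nonneg ((1 / 2 : ℝ) • (x + y)), norm_nonneg x, norm_nonneg y]

theorem stmt1 {X : Type*} [NormedAddCommGroup X] [NormedSpace ℝ X]
    (Φ : X → ℝ≥0∞)
    (hconv : ∀ w w' : X, ∀ θ : ℝ, 0 ≤ θ → θ ≤ 1 →
      Φ (θ • w + (1 - θ) • w') ≤ ENNReal.ofReal θ * Φ w + ENNReal.ofReal (1 - θ) * Φ w')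
    (v : X) (τ : ℝ) (hτ : 0 < τ) (u u' : X) (hfin : Φ u ≠ ⊤)
    (hu : ∀ w : X, Φ u + ENNReal.ofReal (‖u - v‖ ^ 2 / (2 * τ)) ≤
      Φ w + ENNReal.ofReal (‖w - v‖ ^ 2 / (2 * τ)))
    (hu' : ∀ w : X, Φ u' + ENNReal.ofReal (‖u' - v‖ ^ 2 / (2 * τ)) ≤
      Φ w + ENNReal.ofReal (‖w - v‖ ^ 2 / (2 * τ))) :
    ‖u - v‖ = ‖u' - v‖ := by
  set m : X := (1 / 2 : ℝ) • (u + u')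
  have hΦm : 2 * Φ m ≤ Φ u + Φ u' := by
    have h := hconv u u' (1 / 2) (by norm_num) (by norm_num)
    rw [show (1 : ℝ) - 1 / 2 = 1 / 2 by norm_num, ← smul_add, ← mul_add,
      ENNReal.ofReal_div_of_pos two_pos, ENNReal.ofReal_one, ENNReal.ofReal_ofNat] at h
    calc 2 * Φ m ≤ 2 * (1 / 2 * (Φ u + Φ u')) := by gcongr
      _ = Φ u + Φ u' := by rw [← mul_assoc, one_div, ENNReal.mul_inv_cancel two_ne_zero
          ENNReal.ofNat_ne_top, one_mul]
  have hsum := ENNReal.add_le_two_mul_of_minimizers hu hu' hΦm hfin ENNReal.ofReal_ne_top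
  rw [← ENNReal.ofReal_add (by positivity) (by positivity), ← ENNReal.ofReal_ofNat,
    ← ENNReal.ofReal_mul zero_le_two, ENNReal.ofReal_le_ofReal_iff (by positivity),
    ← add_div, mul_div_assoc', div_le_div_iff_of_pos_right (by positivity)] at hsum
  have hmv : m - v = (1 / 2 : ℝ) • ((u - v) + (u' - v)) := by module
  rw [hmv] at hsum
  exact norm_eq_of_sq_add_sq_le_two_mul_sq_norm_midpoint hsum
end

section
/- Let Φ : X → [0,+∞], Φ(u⁰) < +∞, τ > 0, and (uⁿ) the minimizing-movement sequence (uⁿ minimizes Φ(w) + ‖w − uⁿ⁻¹‖²/(2τ)). Then for all integers 0 ≤ m < n, ‖uⁿ − uᵐ‖² ≤ 2 (Φ(uᵐ) − Φ(uⁿ)) (n − m) τ ≤ 2 Φ(u⁰) (n − m) τ. -/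
/-! Testing the minimality of `u (k+1)` against the competitor `u k` gives the energy estimate
`Φ (u (k+1)) + ‖u (k+1) - u k‖² / (2τ) ≤ Φ (u k)`, which telescopes over `k ∈ [m, n)`.
The triangle inequality and Cauchy–Schwarz bound `‖u n - u m‖²` by `(n - m)` times the sum of
the squared increments, hence by `2 (n - m) τ (Φ (u m) - Φ (u n))`. -/

open Finset

open scoped ENNReal

theorem dist_sq_le_mul_sum_Ico_dist_sq {α : Type*} [PseudoMetricSpace α] (f : ℕ → α) {m n : ℕ}
    (hmn : m ≤ n) :
    dist (f n) (f m) ^ 2 ≤ ((n : ℝ) - m) * ∑ k ∈ Ico m n, dist (f (k + 1)) (f k) ^ 2 := by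
  have htriangle : dist (f n) (f m) ≤ ∑ k ∈ Ico m n, dist (f (k + 1)) (f k) := by
    simpa only [dist_comm] using dist_le_Ico_sum_dist f hmn
  calc dist (f n) (f m) ^ 2 ≤ (∑ k ∈ Ico m n, dist (f (k + 1)) (f k)) ^ 2 := by gcongr
    _ ≤ _ := by
      simpa only [Nat.card_Ico, Nat.cast_sub hmn] using
        sq_sum_le_card_mul_sum_sq (s := Ico m n) (f := fun k => dist (f (k + 1)) (f k))

theorem add_sum_Ico_le_of_add_le {M : Type*} [AddCommMonoid M] [PartialOrder M]
    [IsOrderedAddMonoid M] {f a : ℕ → M} (h : ∀ k, f (k + 1) + a k ≤ f k) {m n : ℕ}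
    (hmn : m ≤ n) : f n + ∑ k ∈ Ico m n, a k ≤ f m := by
  induction n, hmn using Nat.le_induction with
  | base => simp
  | succ n hmn ih =>
    calc f (n + 1) + ∑ k ∈ Ico m (n + 1), a k = f (n + 1) + a n + ∑ k ∈ Ico m n, a k := by
          rw [sum_Ico_succ_top hmn, add_comm _ (a n), add_assoc]
      _ ≤ f n + ∑ k ∈ Ico m n, a k := by gcongr; exact h n
      _ ≤ f m := ih

theorem stmt3 {X : Type*} [NormedAddCommGroup X]
    (Φ : X → ℝ≥0∞) (τ : ℝ) (hτ : 0 < τ) (u : ℕ → X)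
    (hfin : Φ (u 0) < ⊤)
    (hmin : ∀ n : ℕ, ∀ w : X,
      Φ (u (n + 1)) + ENNReal.ofReal (‖u (n + 1) - u n‖ ^ 2 / (2 * τ)) ≤
        Φ w + ENNReal.ofReal (‖w - u n‖ ^ 2 / (2 * τ))) :
    ∀ m n : ℕ, m < n →
      ENNReal.ofReal (‖u n - u m‖ ^ 2) ≤
        (Φ (u m) - Φ (u n)) * ENNReal.ofReal (2 * ((n : ℝ) - m) * τ) ∧
      (Φ (u m) - Φ (u n)) * ENNReal.ofReal (2 * ((n : ℝ) - m) * τ) ≤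
        Φ (u 0) * ENNReal.ofReal (2 * ((n : ℝ) - m) * τ) := by
  intro m n hmn
  set e : ℕ → ℝ := fun k => ‖u (k + 1) - u k‖ ^ 2 / (2 * τ)
  have hstep (k : ℕ) : Φ (u (k + 1)) + ENNReal.ofReal (e k) ≤ Φ (u k) := by
    simpa using hmin k (u k)
  have hanti : Antitone (Φ ∘ u) := antitone_nat_of_succ_le fun k => le_of_add_le_left (hstep k)
  have hfin_n : Φ (u n) ≠ ⊤ := ((hanti (Nat.zero_le n)).trans_lt hfin).ne
  have henergy : ENNReal.ofReal (∑ k ∈ Ico m n, e k) ≤ Φ (u m) - Φ (u n) := by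
    rw [ENNReal.ofReal_sum_of_nonneg fun k _ => by positivity]
    exact ENNReal.le_sub_of_add_le_left hfin_n (add_sum_Ico_le_of_add_le (f := Φ ∘ u) hstep hmn.le)
  have hdist : ‖u n - u m‖ ^ 2 ≤ 2 * ((n : ℝ) - m) * τ * ∑ k ∈ Ico m n, e k := by
    have := dist_sq_le_mul_sum_Ico_dist_sq u hmn.le
    simp only [dist_eq_norm] at this
    rw [← sum_div]
    convert this using 1
    field_simp
  refine ⟨?_, mul_le_mul_left (tsub_le_self.trans (hanti (Nat.zero_le m))) _⟩
  calc ENNReal.ofReal (‖u n - u m‖ ^ 2)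
      ≤ ENNReal.ofReal (2 * ((n : ℝ) - m) * τ * ∑ k ∈ Ico m n, e k) :=
        ENNReal.ofReal_le_ofReal hdist
    _ = ENNReal.ofReal (∑ k ∈ Ico m n, e k) * ENNReal.ofReal (2 * ((n : ℝ) - m) * τ) := by
        rw [mul_comm, ENNReal.ofReal_mul (sum_nonneg fun k _ => by positivity)]
    _ ≤ (Φ (u m) - Φ (u n)) * ENNReal.ofReal (2 * ((n : ℝ) - m) * τ) := by gcongr
end

section
/- Let (Ω, μ) be a measure space and Φ : L¹(μ) → [0,+∞] convex satisfying the submodularity inequality Φ(u∧v) + Φ(u∨v) ≤ Φ(u) + Φ(v) for all u, v ∈ L¹(μ). If u, v ∈ L¹(μ), p, q ∈ L^∞(μ) with p ∈ ∂Φ(u) and q ∈ ∂Φ(v) (subgradients in the (L¹, L^∞) duality), then ∫ (q − p)(v − u)⁺ dμ ≥ 0 and ∫ (q − p)(v − u)⁻ dμ ≤ 0. -/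
/-!
Test the subgradient inequality of `p` at `u` against `u ⊔ v` and that of `q` at `v` against
`u ⊓ v`. Since `u ⊔ v - u = (v - u)⁺` and `u ⊓ v - v = -(v - u)⁺`, adding the two inequalities
and using submodularity `Φ (u ⊓ v) + Φ (u ⊔ v) ≤ Φ u + Φ v` leaves `∫ (q - p) (v - u)⁺ ≥ 0`.
The second claim is the first one with the roles of `(u, p)` and `(v, q)` exchanged.
-/

open MeasureTheory
open scoped ENNReal

section LatticeOrderedGroup

variable {α : Type*} [Lattice α] [AddCommGroup α] [AddLeftMono α]

theorem sup_sub_left_eq_posPart_sub (a b : α) : a ⊔ b - a = (b - a)⁺ := by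
  rw [sup_comm, sup_eq_add_posPart_sub, add_sub_cancel_left]

theorem inf_sub_right_eq_neg_posPart_sub (a b : α) : a ⊓ b - b = -(b - a)⁺ := by
  rw [inf_comm, inf_eq_sub_posPart_sub, sub_sub_cancel_left]

end LatticeOrderedGroup

namespace MeasureTheory

variable {Ω : Type*} [MeasurableSpace Ω] {μ : Measure Ω}

/-- `p ∈ ∂Φ(u)` for the `(L¹, L^∞)` pairing. It is meant for `Φ u ≠ ⊤`, where `(Φ u).toReal`
is the value `Φ u` itself. -/
def HasL1Subgradient (Φ : Lp ℝ 1 μ → ℝ≥0∞) (u : Lp ℝ 1 μ) (p : Lp ℝ ⊤ μ) : Prop :=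
  ∀ w : Lp ℝ 1 μ, ENNReal.ofReal ((Φ u).toReal + ∫ x, p x * (w x - u x) ∂μ) ≤ Φ w

theorem HasL1Subgradient.toReal_add_integral_le {Φ : Lp ℝ 1 μ → ℝ≥0∞} {u w : Lp ℝ 1 μ}
    {p : Lp ℝ ⊤ μ} (hp : HasL1Subgradient Φ u p) (hw : Φ w ≠ ⊤) :
    (Φ u).toReal + ∫ x, p x * (w x - u x) ∂μ ≤ (Φ w).toReal :=
  (ENNReal.ofReal_le_iff_le_toReal hw).1 (hp w)

variable {r : ℝ≥0∞}

theorem integral_mul_sup_sub_left (f : Ω → ℝ) (u v : Lp ℝ r μ) :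
    ∫ x, f x * ((u ⊔ v) x - u x) ∂μ = ∫ x, f x * max (v x - u x) 0 ∂μ := by
  refine integral_congr_ae ?_
  filter_upwards [Lp.coeFn_sup u v] with x hx
  rw [hx, Pi.sup_apply, sup_sub_left_eq_posPart_sub]
  rfl

theorem integral_mul_inf_sub_right (f : Ω → ℝ) (u v : Lp ℝ r μ) :
    ∫ x, f x * ((u ⊓ v) x - v x) ∂μ = -∫ x, f x * max (v x - u x) 0 ∂μ := by
  rw [← integral_neg]
  refine integral_congr_ae ?_
  filter_upwards [Lp.coeFn_inf u v] with x hx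
  rw [hx, Pi.inf_apply, inf_sub_right_eq_neg_posPart_sub, mul_neg]
  rfl

theorem integrable_mul_max_sub_zero (p : Lp ℝ ⊤ μ) (u v : Lp ℝ 1 μ) :
    Integrable (fun x ↦ p x * max (v x - u x) 0) μ :=
  ((L1.integrable_coeFn v).sub (L1.integrable_coeFn u)).pos_part.smul_of_top_right (Lp.memLp p)

theorem integral_sub_mul_max_sub_zero_nonneg_of_submodular {Φ : Lp ℝ 1 μ → ℝ≥0∞}
    (hsub : ∀ w w' : Lp ℝ 1 μ, Φ (w ⊓ w') + Φ (w ⊔ w') ≤ Φ w + Φ w')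
    {u v : Lp ℝ 1 μ} {p q : Lp ℝ ⊤ μ} (hΦu : Φ u ≠ ⊤) (hΦv : Φ v ≠ ⊤)
    (hp : HasL1Subgradient Φ u p) (hq : HasL1Subgradient Φ v q) :
    0 ≤ ∫ x, (q x - p x) * max (v x - u x) 0 ∂μ := by
  have huv : Φ u + Φ v ≠ ⊤ := ENNReal.add_ne_top.2 ⟨hΦu, hΦv⟩
  obtain ⟨hinf, hsup⟩ : Φ (u ⊓ v) ≠ ⊤ ∧ Φ (u ⊔ v) ≠ ⊤ :=
    ENNReal.add_ne_top.1 (ne_top_of_le_ne_top huv (hsub u v))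
  have hsubReal : (Φ (u ⊓ v)).toReal + (Φ (u ⊔ v)).toReal ≤ (Φ u).toReal + (Φ v).toReal := by
    rw [← ENNReal.toReal_add hinf hsup, ← ENNReal.toReal_add hΦu hΦv]
    exact ENNReal.toReal_mono huv (hsub u v)
  have hup := hp.toReal_add_integral_le hsup
  have hdown := hq.toReal_add_integral_le hinf
  rw [integral_mul_sup_sub_left] at hup
  rw [integral_mul_inf_sub_right] at hdown
  simp only [sub_mul]
  rw [integral_sub (integrable_mul_max_sub_zero q u v) (integrable_mul_max_sub_zero p u v)]
  linarith

end MeasureTheory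

theorem stmt4_general {Ω : Type*} [MeasurableSpace Ω] (μ : Measure Ω)
    (Φ : Lp ℝ 1 μ → ℝ≥0∞)
    (hsub : ∀ w w' : Lp ℝ 1 μ, Φ (w ⊓ w') + Φ (w ⊔ w') ≤ Φ w + Φ w')
    (u v : Lp ℝ 1 μ) (p q : Lp ℝ ⊤ μ)
    (hΦu : Φ u ≠ ⊤) (hΦv : Φ v ≠ ⊤)
    (hp : ∀ w : Lp ℝ 1 μ,
      ENNReal.ofReal ((Φ u).toReal + ∫ x, p x * (w x - u x) ∂μ) ≤ Φ w)
    (hq : ∀ w : Lp ℝ 1 μ,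
      ENNReal.ofReal ((Φ v).toReal + ∫ x, q x * (w x - v x) ∂μ) ≤ Φ w) :
    0 ≤ ∫ x, (q x - p x) * max (v x - u x) 0 ∂μ ∧
      ∫ x, (q x - p x) * max (u x - v x) 0 ∂μ ≤ 0 := by
  refine ⟨integral_sub_mul_max_sub_zero_nonneg_of_submodular hsub hΦu hΦv hp hq, ?_⟩
  have hswap := integral_sub_mul_max_sub_zero_nonneg_of_submodular hsub hΦv hΦu hq hp
  have hneg : ∫ x, (q x - p x) * max (u x - v x) 0 ∂μ
      = -∫ x, (p x - q x) * max (u x - v x) 0 ∂μ := by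
    rw [← integral_neg]
    congr 1 with x
    ring
  linarith

theorem stmt4 {Ω : Type*} [MeasurableSpace Ω] (μ : Measure Ω)
    (Φ : Lp ℝ 1 μ → ℝ≥0∞)
    (hconv : ∀ w w' : Lp ℝ 1 μ, ∀ θ : ℝ, 0 ≤ θ → θ ≤ 1 →
      Φ (θ • w + (1 - θ) • w') ≤ ENNReal.ofReal θ * Φ w + ENNReal.ofReal (1 - θ) * Φ w')
    (hsub : ∀ w w' : Lp ℝ 1 μ, Φ (w ⊓ w') + Φ (w ⊔ w') ≤ Φ w + Φ w')
    (u v : Lp ℝ 1 μ) (p q : Lp ℝ ⊤ μ)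
    (hΦu : Φ u ≠ ⊤) (hΦv : Φ v ≠ ⊤)
    (hp : ∀ w : Lp ℝ 1 μ,
      ENNReal.ofReal ((Φ u).toReal + ∫ x, p x * (w x - u x) ∂μ) ≤ Φ w)
    (hq : ∀ w : Lp ℝ 1 μ,
      ENNReal.ofReal ((Φ v).toReal + ∫ x, q x * (w x - v x) ∂μ) ≤ Φ w) :
    0 ≤ ∫ x, (q x - p x) * max (v x - u x) 0 ∂μ ∧
      ∫ x, (q x - p x) * max (u x - v x) 0 ∂μ ≤ 0 :=
  stmt4_general μ Φ hsub u v p q hΦu hΦv hp hq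
end

section
/- Let (Ω, μ) be a measure space and Φ : L¹(μ) → [0,+∞] convex and submodular (Φ(u∧v) + Φ(u∨v) ≤ Φ(u) + Φ(v) for all u, v). Let v ∈ L¹(μ), q ∈ L^∞(μ) with q ∈ ∂Φ(v), τ > 0, and let u minimize w ↦ Φ(w) + ‖w − v‖₁²/(2τ). Then ‖u − v‖₁/τ ≤ ‖q‖_∞. -/
/-!
Testing the minimality of `u` against the points `θ • u + (1 - θ) • v` of the segment to `v`
and using convexity of `Φ` gives `Φ u + (1 + θ) ‖u - v‖² / (2τ) ≤ Φ v` for every `θ < 1`; letting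
`θ → 1` yields `Φ u + ‖u - v‖² / τ ≤ Φ v`. The subgradient inequality at `u` and Hölder's
inequality give `Φ v - Φ u ≤ ‖q‖_∞ ‖u - v‖₁`, and dividing by `‖u - v‖₁` gives the claim.
-/

open MeasureTheory Filter Topology
open scoped ENNReal

lemma add_two_mul_le_of_forall_lt_one {a b d : ℝ}
    (h : ∀ θ : ℝ, 0 ≤ θ → θ < 1 → a + d ≤ θ * a + (1 - θ) * b + θ ^ 2 * d) :
    a + 2 * d ≤ b := by
  have hθ : ∀ θ ∈ Set.Ioo (0 : ℝ) 1, a + (1 + θ) * d ≤ b := by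
    rintro θ ⟨hθ0, hθ1⟩
    have hpos : 0 < 1 - θ := by linarith
    have hfactor : (1 - θ) * (a + (1 + θ) * d) ≤ (1 - θ) * b := by
      nlinarith [h θ hθ0.le hθ1]
    exact le_of_mul_le_mul_left hfactor hpos
  have hlim : Tendsto (fun θ : ℝ ↦ a + (1 + θ) * d) (𝓝[<] 1) (𝓝 (a + (1 + 1) * d)) :=
    ((Continuous.tendsto (by fun_prop) 1).mono_left nhdsWithin_le_nhds)
  have := le_of_tendsto hlim (eventually_of_mem (Ioo_mem_nhdsLT zero_lt_one) hθ)
  linarith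

section Proximal

variable {E : Type*} [SeminormedAddCommGroup E] [NormedSpace ℝ E]

def IsProxPoint (f : E → ℝ≥0∞) (τ : ℝ) (v u : E) : Prop :=
  ∀ w : E, f u + ENNReal.ofReal (‖u - v‖ ^ 2 / (2 * τ)) ≤
    f w + ENNReal.ofReal (‖w - v‖ ^ 2 / (2 * τ))

lemma IsProxPoint.add_ofReal_sq_norm_div_le {f : E → ℝ≥0∞} {τ : ℝ} {v u : E}
    (hu : IsProxPoint f τ v u) (hτ : 0 < τ)
    (hconv : ∀ w w' : E, ∀ θ : ℝ, 0 ≤ θ → θ ≤ 1 →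
      f (θ • w + (1 - θ) • w') ≤ ENNReal.ofReal θ * f w + ENNReal.ofReal (1 - θ) * f w') :
    f u + ENNReal.ofReal (‖u - v‖ ^ 2 / τ) ≤ f v := by
  rcases eq_or_ne (f v) ⊤ with hv | hv
  · simp [hv]
  set D := ‖u - v‖ ^ 2 / (2 * τ)
  have hD : 0 ≤ D := by positivity
  have hfu : f u ≠ ⊤ := by
    have hle : f u + ENNReal.ofReal D ≤ f v := by simpa using hu v
    exact ne_top_of_le_ne_top hv (le_self_add.trans hle)
  have hsegment : ∀ θ : ℝ, 0 ≤ θ → θ < 1 →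
      (f u).toReal + D ≤ θ * (f u).toReal + (1 - θ) * (f v).toReal + θ ^ 2 * D := by
    intro θ hθ0 hθ1
    have hdist : ‖θ • u + (1 - θ) • v - v‖ ^ 2 / (2 * τ) = θ ^ 2 * D := by
      rw [show θ • u + (1 - θ) • v - v = θ • (u - v) by
        rw [sub_smul, one_smul, smul_sub]; abel, norm_smul, Real.norm_of_nonneg hθ0]
      ring
    have h := (hu (θ • u + (1 - θ) • v)).trans
      (add_le_add_left (hconv u v θ hθ0 hθ1.le) _)
    rw [hdist] at h
    have h' := ENNReal.toReal_mono (by finiteness) h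
    rwa [ENNReal.toReal_add hfu ENNReal.ofReal_ne_top, ENNReal.toReal_add (by finiteness)
      ENNReal.ofReal_ne_top, ENNReal.toReal_add (by finiteness) (by finiteness),
      ENNReal.toReal_mul, ENNReal.toReal_mul, ENNReal.toReal_ofReal hθ0,
      ENNReal.toReal_ofReal (sub_nonneg.2 hθ1.le), ENNReal.toReal_ofReal hD,
      ENNReal.toReal_ofReal (by positivity : 0 ≤ θ ^ 2 * D)] at h'
  have hreal := add_two_mul_le_of_forall_lt_one hsegment
  rw [← ENNReal.ofReal_toReal hfu, ← ENNReal.ofReal_toReal hv,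
    ← ENNReal.ofReal_add ENNReal.toReal_nonneg (by positivity)]
  refine ENNReal.ofReal_le_ofReal ?_
  convert hreal using 2
  ring

end Proximal

lemma abs_integral_mul_le_norm_mul_norm {Ω : Type*} [MeasurableSpace Ω] {μ : Measure Ω}
    {p r : ℝ≥0∞} [ENNReal.HolderTriple p r 1] (q : Lp ℝ p μ) (g : Lp ℝ r μ) :
    |∫ x, q x * g x ∂μ| ≤ ‖q‖ * ‖g‖ := by
  have hsmul : ∫ x, q x * g x ∂μ = ∫ x, (q • g : Lp ℝ 1 μ) x ∂μ :=
    integral_congr_ae (Lp.coeFn_lpSMul q g).symm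
  rw [hsmul, ← Real.norm_eq_abs, ← L1.integral_eq_integral]
  exact (L1.norm_integral_le _).trans (Lp.norm_smul_le q g)

theorem stmt5_general {Ω : Type*} [MeasurableSpace Ω] (μ : Measure Ω)
    (Φ : Lp ℝ 1 μ → ℝ≥0∞)
    (hconv : ∀ w w' : Lp ℝ 1 μ, ∀ θ : ℝ, 0 ≤ θ → θ ≤ 1 →
      Φ (θ • w + (1 - θ) • w') ≤ ENNReal.ofReal θ * Φ w + ENNReal.ofReal (1 - θ) * Φ w')
    (v : Lp ℝ 1 μ) (q : Lp ℝ ⊤ μ) (hΦv : Φ v ≠ ⊤)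
    (hq : ∀ w : Lp ℝ 1 μ,
      ENNReal.ofReal ((Φ v).toReal + ∫ x, q x * (w x - v x) ∂μ) ≤ Φ w)
    (τ : ℝ) (hτ : 0 < τ) (u : Lp ℝ 1 μ)
    (hu : ∀ w : Lp ℝ 1 μ, Φ u + ENNReal.ofReal (‖u - v‖ ^ 2 / (2 * τ)) ≤
      Φ w + ENNReal.ofReal (‖w - v‖ ^ 2 / (2 * τ))) :
    ‖u - v‖ / τ ≤ ‖q‖ := by
  set N := ‖u - v‖
  have hprox := IsProxPoint.add_ofReal_sq_norm_div_le hu hτ hconv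
  have hΦu : Φ u ≠ ⊤ := ne_top_of_le_ne_top hΦv (le_self_add.trans hprox)
  have hdecrease : (Φ u).toReal + N ^ 2 / τ ≤ (Φ v).toReal := by
    have h := ENNReal.toReal_mono hΦv hprox
    rwa [ENNReal.toReal_add hΦu ENNReal.ofReal_ne_top,
      ENNReal.toReal_ofReal (by positivity)] at h
  have hsubgrad := (ENNReal.ofReal_le_iff_le_toReal hΦu).1 (hq u)
  have hholder : |∫ x, q x * (u x - v x) ∂μ| ≤ ‖q‖ * N := by
    refine (abs_integral_mul_le_norm_mul_norm q (u - v)).trans_eq' (congrArg abs ?_)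
    refine integral_congr_ae ?_
    filter_upwards [Lp.coeFn_sub u v] with x hx
    rw [hx, Pi.sub_apply]
  have hN : N * (N / τ) ≤ N * ‖q‖ := by
    rw [← mul_div_assoc, ← sq]
    linarith [neg_abs_le (∫ x, q x * (u x - v x) ∂μ)]
  rcases (show 0 ≤ N from norm_nonneg _).eq_or_lt with hN0 | hN0
  · rw [← hN0, zero_div]
    exact norm_nonneg q
  · exact le_of_mul_le_mul_left hN hN0

theorem stmt5 {Ω : Type*} [MeasurableSpace Ω] (μ : Measure Ω)
    (Φ : Lp ℝ 1 μ → ℝ≥0∞)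
    (hconv : ∀ w w' : Lp ℝ 1 μ, ∀ θ : ℝ, 0 ≤ θ → θ ≤ 1 →
      Φ (θ • w + (1 - θ) • w') ≤ ENNReal.ofReal θ * Φ w + ENNReal.ofReal (1 - θ) * Φ w')
    (hsub : ∀ w w' : Lp ℝ 1 μ, Φ (w ⊓ w') + Φ (w ⊔ w') ≤ Φ w + Φ w')
    (v : Lp ℝ 1 μ) (q : Lp ℝ ⊤ μ) (hΦv : Φ v ≠ ⊤)
    (hq : ∀ w : Lp ℝ 1 μ,
      ENNReal.ofReal ((Φ v).toReal + ∫ x, q x * (w x - v x) ∂μ) ≤ Φ w)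
    (τ : ℝ) (hτ : 0 < τ) (u : Lp ℝ 1 μ)
    (hu : ∀ w : Lp ℝ 1 μ, Φ u + ENNReal.ofReal (‖u - v‖ ^ 2 / (2 * τ)) ≤
      Φ w + ENNReal.ofReal (‖w - v‖ ^ 2 / (2 * τ))) :
    ‖u - v‖ / τ ≤ ‖q‖ :=
  stmt5_general μ Φ hconv v q hΦv hq τ hτ u hu
end

section
/- Let Φ : L¹(μ) → [0,+∞], u⁰ ∈ L¹(μ), and for λ, λ' ≥ 0 let v minimize w ↦ Φ(w) + λ∫ w dμ over {w ≥ u⁰} and v' minimize w ↦ Φ(w) + λ'∫ w dμ over {w ≥ u⁰}. Assume the submodularity inequality Φ(v∧v') + Φ(v∨v') ≤ Φ(v) + Φ(v'). If λ > λ', then ∫ (v − v')⁺ dμ ≤ 0, i.e. v ≤ v' a.e. -/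
/-!
Add the minimality of `v` tested against `v ⊓ v'` to the minimality of `v'` tested against
`v ⊔ v'`. Submodularity cancels the `Φ`-terms, and since `∫ (v ⊓ v') + ∫ (v ⊔ v') = ∫ v + ∫ v'`
what remains is `(λ - λ') ∫ (v - v')⁺ ≤ 0`.
-/

open MeasureTheory
open scoped ENNReal

section Lattice

variable {α : Type*} [Lattice α] (Φ : α → ℝ≥0∞) (L : α → ℝ) {u0 v v' : α} {lam lam' : ℝ}

theorem add_le_add_of_submodular_of_minimizes (hlam : 0 ≤ lam) (hlam' : 0 ≤ lam')
    (hL : ∀ w, u0 ≤ w → 0 ≤ L w) (hv : u0 ≤ v) (hv' : u0 ≤ v')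
    (hΦv : Φ v ≠ ⊤) (hΦv' : Φ v' ≠ ⊤)
    (hsub : Φ (v ⊓ v') + Φ (v ⊔ v') ≤ Φ v + Φ v')
    (hminv : ∀ w, u0 ≤ w → Φ v + ENNReal.ofReal (lam * L v) ≤ Φ w + ENNReal.ofReal (lam * L w))
    (hminv' : ∀ w, u0 ≤ w →
      Φ v' + ENNReal.ofReal (lam' * L v') ≤ Φ w + ENNReal.ofReal (lam' * L w)) :
    lam * L v + lam' * L v' ≤ lam * L (v ⊓ v') + lam' * L (v ⊔ v') := by
  have hinf : u0 ≤ v ⊓ v' := le_inf hv hv'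
  have hsup : u0 ≤ v ⊔ v' := hv.trans le_sup_left
  have := hL v hv; have := hL v' hv'; have := hL _ hinf; have := hL _ hsup
  have hsum : Φ v + Φ v' + ENNReal.ofReal (lam * L v + lam' * L v') ≤
      Φ v + Φ v' + ENNReal.ofReal (lam * L (v ⊓ v') + lam' * L (v ⊔ v')) := by
    rw [ENNReal.ofReal_add (by positivity) (by positivity),
      ENNReal.ofReal_add (by positivity) (by positivity)]
    calc Φ v + Φ v' + (ENNReal.ofReal (lam * L v) + ENNReal.ofReal (lam' * L v'))
        = (Φ v + ENNReal.ofReal (lam * L v)) + (Φ v' + ENNReal.ofReal (lam' * L v')) := by ring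
      _ ≤ (Φ (v ⊓ v') + ENNReal.ofReal (lam * L (v ⊓ v'))) +
            (Φ (v ⊔ v') + ENNReal.ofReal (lam' * L (v ⊔ v'))) :=
          add_le_add (hminv _ hinf) (hminv' _ hsup)
      _ = (Φ (v ⊓ v') + Φ (v ⊔ v')) +
            (ENNReal.ofReal (lam * L (v ⊓ v')) + ENNReal.ofReal (lam' * L (v ⊔ v'))) := by ring
      _ ≤ _ := add_le_add_left hsub _
  have hcancel := (ENNReal.add_le_add_iff_left (ENNReal.add_ne_top.mpr ⟨hΦv, hΦv'⟩)).mp hsum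
  exact (ENNReal.ofReal_le_ofReal_iff (by positivity)).mp hcancel

theorem le_apply_inf_of_submodular_of_minimizes (hlam' : 0 ≤ lam') (hlt : lam' < lam)
    (hL : ∀ w, u0 ≤ w → 0 ≤ L w) (hmod : L (v ⊓ v') + L (v ⊔ v') = L v + L v')
    (hv : u0 ≤ v) (hv' : u0 ≤ v') (hΦv : Φ v ≠ ⊤) (hΦv' : Φ v' ≠ ⊤)
    (hsub : Φ (v ⊓ v') + Φ (v ⊔ v') ≤ Φ v + Φ v')
    (hminv : ∀ w, u0 ≤ w → Φ v + ENNReal.ofReal (lam * L v) ≤ Φ w + ENNReal.ofReal (lam * L w))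
    (hminv' : ∀ w, u0 ≤ w →
      Φ v' + ENNReal.ofReal (lam' * L v') ≤ Φ w + ENNReal.ofReal (lam' * L w)) :
    L v ≤ L (v ⊓ v') := by
  have hsum := add_le_add_of_submodular_of_minimizes Φ L (hlam'.trans hlt.le) hlam' hL hv hv'
    hΦv hΦv' hsub hminv hminv'
  have hprod : (lam - lam') * (L v - L (v ⊓ v')) ≤ 0 := by linear_combination hsum + lam' * hmod
  exact sub_nonpos.mp (nonpos_of_mul_nonpos_right hprod (sub_pos.mpr hlt))

end Lattice

namespace MeasureTheory.Lp

variable {Ω : Type*} [MeasurableSpace Ω] {μ : Measure Ω}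

theorem integral_inf_add_integral_sup (f g : Lp ℝ 1 μ) :
    ∫ x, (f ⊓ g) x ∂μ + ∫ x, (f ⊔ g) x ∂μ = ∫ x, f x ∂μ + ∫ x, g x ∂μ := by
  rw [← integral_add (L1.integrable_coeFn _) (L1.integrable_coeFn _),
    ← integral_add (L1.integrable_coeFn _) (L1.integrable_coeFn _)]
  refine integral_congr_ae ?_
  filter_upwards [coeFn_inf f g, coeFn_sup f g] with x hinf hsup
  rw [hinf, hsup, Pi.inf_apply, Pi.sup_apply]
  exact min_add_max _ _

theorem integral_posPart_sub (f g : Lp ℝ 1 μ) :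
    ∫ x, max (f x - g x) 0 ∂μ = ∫ x, f x ∂μ - ∫ x, (f ⊓ g) x ∂μ := by
  rw [← integral_sub (L1.integrable_coeFn _) (L1.integrable_coeFn _)]
  refine integral_congr_ae ?_
  filter_upwards [coeFn_inf f g] with x hinf
  rw [hinf, Pi.inf_apply]
  rcases le_total (f x) (g x) with h | h <;> simp [h]

theorem le_of_integral_posPart_sub_nonpos {f g : Lp ℝ 1 μ}
    (h : ∫ x, max (f x - g x) 0 ∂μ ≤ 0) : f ≤ g := by
  have hzero : (fun x => max (f x - g x) 0) =ᵐ[μ] 0 :=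
    (integral_eq_zero_iff_of_nonneg (fun _ => le_max_right _ _)
      ((L1.integrable_coeFn f).sub (L1.integrable_coeFn g)).pos_part).mp
      (h.antisymm (integral_nonneg fun _ => le_max_right _ _))
  rw [← coeFn_le]
  filter_upwards [hzero] with x hx
  exact sub_nonpos.mp (max_eq_right_iff.mp hx)

theorem integral_sub_nonneg_of_le {u w : Lp ℝ 1 μ} (h : u ≤ w) : 0 ≤ ∫ x, (w x - u x) ∂μ :=
  integral_nonneg_of_ae <| by
    filter_upwards [(coeFn_le u w).mpr h] with x hx
    exact sub_nonneg.mpr hx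

theorem integral_coeFn_sub (u w : Lp ℝ 1 μ) :
    ∫ x, (w x - u x) ∂μ = ∫ x, w x ∂μ - ∫ x, u x ∂μ :=
  integral_sub (L1.integrable_coeFn w) (L1.integrable_coeFn u)

end MeasureTheory.Lp

theorem stmt7 {Ω : Type*} [MeasurableSpace Ω] (μ : Measure Ω)
    (Φ : Lp ℝ 1 μ → ℝ≥0∞) (u0 : Lp ℝ 1 μ)
    (lam lam' : ℝ) (hlam' : 0 ≤ lam') (hlt : lam' < lam)
    (v v' : Lp ℝ 1 μ) (hv : u0 ≤ v) (hv' : u0 ≤ v')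
    (hΦv : Φ v ≠ ⊤) (hΦv' : Φ v' ≠ ⊤)
    (hsub : Φ (v ⊓ v') + Φ (v ⊔ v') ≤ Φ v + Φ v')
    (hminv : ∀ w : Lp ℝ 1 μ, u0 ≤ w →
      Φ v + ENNReal.ofReal (lam * ∫ x, (v x - u0 x) ∂μ) ≤
        Φ w + ENNReal.ofReal (lam * ∫ x, (w x - u0 x) ∂μ))
    (hminv' : ∀ w : Lp ℝ 1 μ, u0 ≤ w →
      Φ v' + ENNReal.ofReal (lam' * ∫ x, (v' x - u0 x) ∂μ) ≤
        Φ w + ENNReal.ofReal (lam' * ∫ x, (w x - u0 x) ∂μ)) :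
    (∫ x, max (v x - v' x) 0 ∂μ ≤ 0) ∧ v ≤ v' := by
  have hmod : ∫ x, ((v ⊓ v') x - u0 x) ∂μ + ∫ x, ((v ⊔ v') x - u0 x) ∂μ =
      ∫ x, (v x - u0 x) ∂μ + ∫ x, (v' x - u0 x) ∂μ := by
    simp only [Lp.integral_coeFn_sub]
    linarith [Lp.integral_inf_add_integral_sup v v']
  have hle := le_apply_inf_of_submodular_of_minimizes Φ (fun w => ∫ x, (w x - u0 x) ∂μ)
    hlam' hlt (fun _ => Lp.integral_sub_nonneg_of_le) hmod hv hv' hΦv hΦv' hsub hminv hminv'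
  have hpos : ∫ x, max (v x - v' x) 0 ∂μ ≤ 0 := by
    simp only [Lp.integral_coeFn_sub] at hle
    linarith [Lp.integral_posPart_sub v v']
  exact ⟨hpos, Lp.le_of_integral_posPart_sub_nonpos hpos⟩
end

section
/- Fix R > 0, τ > 0 and consider g(r) = 2πr + (π²/(2τ))(R² − r²)² on [0, R]. Then for τ sufficiently small g has a minimizer r_τ ∈ (0, R), every such minimizer satisfies the stationarity equation 2π = (2π²/τ) r_τ (R² − r_τ²), and r_τ = R − τ/(2πR²) + o(τ) as τ → 0. -/
open Real Set Filter Asymptotics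

/-!
Comparing a minimizer `r` with the competitor `R` gives `π R² (R - r) ≤ 4τ`, so minimizers lie
within `O(τ)` of `R`, hence in `(R/2, R]` once `τ < πR³/8`; and `R` itself is excluded because
`g'(R) = 2π > 0`. At an interior minimizer `g' = 0`, i.e. `τ = π r (R² - r²)` exactly, and
substituting this into the expansion gives
`r - (R - τ/(2πR²)) = -(R - r)² (r + 2R) / (2R²) = O(τ²)`.
-/

theorem IsMinOn.nonpos_of_hasDerivAt_right {f : ℝ → ℝ} {a b f' : ℝ} (hab : a < b)
    (hmin : IsMinOn f (Icc a b) b) (hf : HasDerivAt f f' b) : f' ≤ 0 := by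
  have hcone : a - b ∈ posTangentConeAt (Icc a b) b :=
    sub_mem_posTangentConeAt_of_segment_subset (by rw [segment_symm, segment_eq_Icc hab.le])
  have := hmin.localize.hasFDerivWithinAt_nonneg hf.hasFDerivAt.hasFDerivWithinAt hcone
  simp only [ContinuousLinearMap.toSpanSingleton_apply, smul_eq_mul] at this
  nlinarith

noncomputable def diskStepEnergy (R τ r : ℝ) : ℝ :=
  2 * π * r + π ^ 2 / (2 * τ) * (R ^ 2 - r ^ 2) ^ 2

section diskStepEnergy

variable {R τ r : ℝ}

theorem hasDerivAt_diskStepEnergy (R τ r : ℝ) :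
    HasDerivAt (diskStepEnergy R τ) (2 * π - 2 * π ^ 2 / τ * r * (R ^ 2 - r ^ 2)) r := by
  have h : HasDerivAt (diskStepEnergy R τ)
      (2 * π * 1 + π ^ 2 / (2 * τ) * (2 * (R ^ 2 - r ^ 2) * (0 - 2 * r))) r := by
    have := (((hasDerivAt_pow 2 r).const_sub (R ^ 2)).pow 2).const_mul (π ^ 2 / (2 * τ))
    exact ((hasDerivAt_id r).const_mul (2 * π)).add (by simpa using this)
  convert h using 1
  ring

theorem continuous_diskStepEnergy (R τ : ℝ) : Continuous (diskStepEnergy R τ) :=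
  continuous_iff_continuousAt.2 fun r => (hasDerivAt_diskStepEnergy R τ r).continuousAt

theorem sub_le_of_isMinOn_diskStepEnergy (hR : 0 < R) (hτ : 0 < τ) (hr : r ∈ Icc 0 R)
    (hmin : IsMinOn (diskStepEnergy R τ) (Icc 0 R) r) : R - r ≤ 4 * τ / (π * R ^ 2) := by
  have hle : diskStepEnergy R τ r ≤ diskStepEnergy R τ R := hmin (right_mem_Icc.2 hR.le)
  have key : π ^ 2 * ((R - r) * (R + r)) ^ 2 ≤ 4 * π * τ * (R - r) := by
    simp only [diskStepEnergy, sub_self, ne_eq, OfNat.ofNat_ne_zero, not_false_eq_true, zero_pow,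
      mul_zero, add_zero] at hle
    rw [← sub_nonneg] at hle ⊢
    have : 0 ≤ 2 * τ * (2 * π * R - (2 * π * r + π ^ 2 / (2 * τ) * (R ^ 2 - r ^ 2) ^ 2)) :=
      by positivity
    convert this using 1
    field_simp
    ring
  rw [le_div_iff₀ (by positivity)]
  rcases hr.2.eq_or_lt with rfl | hlt
  · rw [sub_self, zero_mul]
    positivity
  · have hπ := pi_pos
    have hdiv : π * (R - r) * (R + r) ^ 2 ≤ 4 * τ := by
      have hpos : 0 < π * (R - r) := mul_pos hπ (sub_pos.2 hlt)
      nlinarith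
    have hR_le : R ^ 2 ≤ (R + r) ^ 2 := by nlinarith [hr.1]
    nlinarith [mul_le_mul_of_nonneg_left hR_le (mul_nonneg hπ.le (sub_pos.2 hlt).le)]

theorem lt_of_isMinOn_diskStepEnergy (hR : 0 < R) (hr : r ∈ Icc 0 R)
    (hmin : IsMinOn (diskStepEnergy R τ) (Icc 0 R) r) : r < R := by
  refine hr.2.lt_of_ne fun hrR => ?_
  subst hrR
  have := hmin.nonpos_of_hasDerivAt_right hR (hasDerivAt_diskStepEnergy r τ r)
  simp only [sub_self, mul_zero, sub_zero] at this
  linarith [pi_pos]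

theorem mem_Ioo_of_isMinOn_diskStepEnergy (hR : 0 < R) (hτ : 0 < τ) (hτR : τ < π * R ^ 3 / 8)
    (hr : r ∈ Icc 0 R) (hmin : IsMinOn (diskStepEnergy R τ) (Icc 0 R) r) : r ∈ Ioo 0 R := by
  have hgap := sub_le_of_isMinOn_diskStepEnergy hR hτ hr hmin
  have hsmall : 4 * τ / (π * R ^ 2) < R / 2 := by
    rw [div_lt_iff₀ (by positivity)]
    nlinarith [pi_pos]
  exact ⟨by linarith, lt_of_isMinOn_diskStepEnergy hR hr hmin⟩

theorem eq_of_isMinOn_diskStepEnergy (hr : r ∈ Ioo 0 R)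
    (hmin : IsMinOn (diskStepEnergy R τ) (Icc 0 R) r) :
    2 * π = 2 * π ^ 2 / τ * r * (R ^ 2 - r ^ 2) :=
  sub_eq_zero.1 <| (hmin.isLocalMin (Icc_mem_nhds hr.1 hr.2)).hasDerivAt_eq_zero
    (hasDerivAt_diskStepEnergy R τ r)

theorem abs_sub_le_of_isMinOn_diskStepEnergy (hR : 0 < R) (hτ : 0 < τ)
    (hτR : τ < π * R ^ 3 / 8) (hr : r ∈ Icc 0 R)
    (hmin : IsMinOn (diskStepEnergy R τ) (Icc 0 R) r) :
    |r - (R - τ / (2 * π * R ^ 2))| ≤ 24 / (π ^ 2 * R ^ 5) * τ ^ 2 := by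
  have hπ := pi_pos
  have hstat :=
    eq_of_isMinOn_diskStepEnergy (mem_Ioo_of_isMinOn_diskStepEnergy hR hτ hτR hr hmin) hmin
  have hτeq : τ = π * r * (R ^ 2 - r ^ 2) := by
    field_simp at hstat
    linear_combination hstat
  have hgap := sub_le_of_isMinOn_diskStepEnergy hR hτ hr hmin
  have hexpand : r - (R - τ / (2 * π * R ^ 2)) = -((R - r) ^ 2 * (r + 2 * R) / (2 * R ^ 2)) := by
    rw [hτeq]
    field_simp
    ring
  calc |r - (R - τ / (2 * π * R ^ 2))| = (R - r) ^ 2 * (r + 2 * R) / (2 * R ^ 2) := by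
        rw [hexpand, abs_neg, abs_of_nonneg (by have := hr.1; positivity)]
    _ ≤ (R - r) ^ 2 * (3 * R) / (2 * R ^ 2) := by gcongr; linarith [hr.2]
    _ = 3 / (2 * R) * (R - r) ^ 2 := by field_simp
    _ ≤ 3 / (2 * R) * (4 * τ / (π * R ^ 2)) ^ 2 := by gcongr; linarith [hr.2]
    _ = 24 / (π ^ 2 * R ^ 5) * τ ^ 2 := by field_simp; ring

end diskStepEnergy

theorem stmt19 (R : ℝ) (hR : 0 < R) :
    (∀ᶠ τ : ℝ in nhdsWithin 0 (Ioi 0),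
      ∃ r ∈ Ioo 0 R, IsMinOn (fun r' => 2 * π * r' + π ^ 2 / (2 * τ) * (R ^ 2 - r' ^ 2) ^ 2)
        (Icc 0 R) r) ∧
    (∀ᶠ τ : ℝ in nhdsWithin 0 (Ioi 0),
      ∀ r ∈ Icc 0 R,
        IsMinOn (fun r' => 2 * π * r' + π ^ 2 / (2 * τ) * (R ^ 2 - r' ^ 2) ^ 2) (Icc 0 R) r →
          r ∈ Ioo 0 R ∧ 2 * π = 2 * π ^ 2 / τ * r * (R ^ 2 - r ^ 2)) ∧
    (∀ r : ℝ → ℝ,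
      (∀ᶠ τ : ℝ in nhdsWithin 0 (Ioi 0), r τ ∈ Icc 0 R ∧
        IsMinOn (fun r' => 2 * π * r' + π ^ 2 / (2 * τ) * (R ^ 2 - r' ^ 2) ^ 2) (Icc 0 R) (r τ)) →
      (fun τ => r τ - (R - τ / (2 * π * R ^ 2))) =o[nhdsWithin 0 (Ioi 0)] id) := by
  have hsmall : ∀ᶠ τ : ℝ in nhdsWithin 0 (Ioi 0), 0 < τ ∧ τ < π * R ^ 3 / 8 :=
    eventually_mem_nhdsWithin.and <|
      nhdsWithin_le_nhds <| eventually_lt_nhds (by positivity)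
  refine ⟨?_, ?_, fun r hr => ?_⟩
  · filter_upwards [hsmall] with τ ⟨hτ, hτR⟩
    obtain ⟨r, hr, hmin⟩ := isCompact_Icc.exists_isMinOn (nonempty_Icc.2 hR.le)
      (continuous_diskStepEnergy R τ).continuousOn
    exact ⟨r, mem_Ioo_of_isMinOn_diskStepEnergy hR hτ hτR hr hmin, hmin⟩
  · filter_upwards [hsmall] with τ ⟨hτ, hτR⟩ r hr hmin
    have hr' := mem_Ioo_of_isMinOn_diskStepEnergy hR hτ hτR hr hmin
    exact ⟨hr', eq_of_isMinOn_diskStepEnergy hr' hmin⟩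
  · have hbound : (fun τ => r τ - (R - τ / (2 * π * R ^ 2))) =O[nhdsWithin 0 (Ioi 0)]
        fun τ => τ ^ 2 := by
      refine IsBigO.of_bound (24 / (π ^ 2 * R ^ 5)) ?_
      filter_upwards [hsmall, hr] with τ ⟨hτ, hτR⟩ ⟨hrτ, hmin⟩
      simpa using abs_sub_le_of_isMinOn_diskStepEnergy hR hτ hτR hrτ hmin
    exact hbound.trans_isLittleO ((isLittleO_pow_id one_lt_two).mono nhdsWithin_le_nhds)
end
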